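/- arXiv:2010.05100 — 2 statements merged into one kernel-verified Lean document; each statement's English description precedes it below -/
import Mathlib

section
/- The octonionic tangent, defined by tan(z) := −cot(z + π/2), satisfies tan(z) = cot(z) − 128·cot(2z) for every z ∈ 𝕆 such that 2z + πm ≠ 0 for all m ∈ ℤ. -/
noncomputable section
open Real MeasureTheory

/-- The octonions `𝕆`, modeled as `ℝ⁸` with the Euclidean norm, endowed below with the
Cayley–Dickson (octonionic) multiplication. -/
abbrev O8 : Type := EuclideanSpace ℝ (Fin 8)

namespace Octo

/-- The standard basis units `e₀ = 1, e₁, …, e₇`. -/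
def ee : Fin 8 → O8 := fun i => EuclideanSpace.single i 1

/-- The octonionic multiplication table `(eᵢ · eⱼ)`, arising from the Cayley–Dickson doubling
of the quaternions (with `e₄ = e₁e₂`, `e₅ = e₁e₃`, `e₆ = e₂e₃`, `e₇ = (e₁e₂)e₃`). -/
def mulTable : Fin 8 → Fin 8 → O8 :=
  ![![ee 0, ee 1, ee 2, ee 3, ee 4, ee 5, ee 6, ee 7],
    ![ee 1, -ee 0, ee 4, ee 5, -ee 2, -ee 3, -ee 7, ee 6],
    ![ee 2, -ee 4, -ee 0, ee 6, ee 1, ee 7, -ee 3, -ee 5],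
    ![ee 3, -ee 5, -ee 6, -ee 0, -ee 7, ee 1, ee 2, ee 4],
    ![ee 4, ee 2, -ee 1, ee 7, -ee 0, -ee 6, ee 5, -ee 3],
    ![ee 5, ee 3, -ee 7, -ee 1, ee 6, -ee 0, -ee 4, ee 2],
    ![ee 6, ee 7, ee 3, -ee 2, -ee 5, ee 4, -ee 0, -ee 1],
    ![ee 7, -ee 6, ee 5, -ee 4, ee 3, -ee 2, ee 1, -ee 0]]

/-- Octonionic multiplication, extended bilinearly from the multiplication table. -/
instance : Mul O8 := ⟨fun x y => ∑ i : Fin 8, ∑ j : Fin 8, (x i * y j) • mulTable i j⟩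

instance : One O8 := ⟨ee 0⟩

/-- The real part `Re z = x₀` of an octonion. -/
def re (z : O8) : ℝ := z 0

/-- Octonionic conjugation `z̄ = x₀ - x₁e₁ - ⋯ - x₇e₇`. -/
def conj (z : O8) : O8 := (2 * z 0) • ee 0 - z

/-- The real number `r`, viewed as an octonion. -/
def ofReal (r : ℝ) : O8 := r • ee 0

/-- The octonionic Cauchy kernel `q₀(z) = z̄ / |z|⁸`. -/
def q0 (z : O8) : O8 := (‖z‖ ^ 8)⁻¹ • conj z

/-- `u / |u|⁸` (numerator not conjugated). -/
def pk (u : O8) : O8 := (‖u‖ ^ 8)⁻¹ • u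

/-- The octonionic Cauchy–Riemann operator `𝒟f = ∂f/∂x₀ + Σᵢ eᵢ ∂f/∂xᵢ`, applied from the left.
`f` is left 𝕆-regular on `U` if `Dl f z = 0` for all `z ∈ U`. -/
def Dl (f : O8 → O8) (z : O8) : O8 :=
  fderiv ℝ f z (ee 0) + ∑ i : Fin 7, ee i.succ * fderiv ℝ f z (ee i.succ)

/-- The octonionic Cauchy–Riemann operator applied from the right:
`f𝒟 = ∂f/∂x₀ + Σᵢ (∂f/∂xᵢ) eᵢ`. -/
def Dr (f : O8 → O8) (z : O8) : O8 :=
  fderiv ℝ f z (ee 0) + ∑ i : Fin 7, fderiv ℝ f z (ee i.succ) * ee i.succ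

/-- The singly-periodic octonionic monogenic cotangent
`cot z = Σ_{m ∈ ℤ} (z̄ + πm)/|z + πm|⁸`. -/
def octCot (z : O8) : O8 := ∑' m : ℤ, q0 (z + ofReal (π * m))

/-- The octonionic tangent `tan z = - cot (z + π/2)`. -/
def octTan (z : O8) : O8 := - octCot (z + ofReal (π / 2))

/-- The singly-periodic octonionic monogenic cosecant
`csc z = Σ_{n ∈ ℤ} (-1)ⁿ (z̄ + πn)/|z + πn|⁸`. -/
def octCsc (z : O8) : O8 := ∑' n : ℤ, ((-1 : ℝ) ^ n) • q0 (z + ofReal (π * n))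

end Octo

/-! Splitting the lattice `(π/2)ℤ` into its even and odd points splits the absolutely convergent
series `Σₘ q₀(z + πm/2)` into `cot z + cot (z + π/2)`. Since `q₀` is homogeneous of degree `-7`,
the same series is `2⁷ Σₘ q₀(2z + πm) = 128 cot (2z)`. -/

theorem HasSum.int_even_add_odd {M : Type*} [AddCommMonoid M] [TopologicalSpace M]
    [ContinuousAdd M] {f : ℤ → M} {a b : M} (he : HasSum (fun k => f (2 * k)) a)
    (ho : HasSum (fun k => f (2 * k + 1)) b) : HasSum f (a + b) := by
  have hmul := mul_right_injective₀ (two_ne_zero' ℤ)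
  replace ho := ((add_left_injective 1).comp hmul).hasSum_range_iff.2 ho
  refine (hmul.hasSum_range_iff.2 he).add_isCompl ?_ ho
  simpa [Function.comp_def] using Int.isCompl_even_odd

namespace Octo

theorem ofReal_add (a b : ℝ) : ofReal (a + b) = ofReal a + ofReal b := by
  simp only [ofReal, add_smul]

theorem smul_ofReal (c r : ℝ) : c • ofReal r = ofReal (c * r) := by
  simp only [ofReal, smul_smul]

theorem conj_smul (c : ℝ) (u : O8) : conj (c • u) = c • conj u := by
  simp only [conj, smul_sub, smul_smul, PiLp.smul_apply, smul_eq_mul, mul_left_comm]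

theorem norm_conj (u : O8) : ‖conj u‖ = ‖u‖ := by
  have hcoord : ∀ i, ‖conj u i‖ = ‖u i‖ := by
    intro i
    by_cases hi : i = 0
    · subst hi; simp [conj, ee, two_mul]
    · simp [conj, ee, hi]
  simp only [EuclideanSpace.norm_eq, hcoord]

theorem norm_q0 (u : O8) : ‖q0 u‖ = (‖u‖ ^ 7)⁻¹ := by
  rw [q0, norm_smul, norm_conj, norm_inv, norm_pow, norm_norm]
  rcases eq_or_ne ‖u‖ 0 with hu | hu
  · simp [hu]
  · field_simp

theorem q0_smul (c : ℝ) (u : O8) : q0 (c • u) = (c / |c| ^ 8) • q0 u := by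
  rw [q0, q0, conj_smul, norm_smul, smul_smul, smul_smul, mul_pow, Real.norm_eq_abs, mul_inv]
  ring_nf

theorem summable_q0_add_ofReal_mul (z : O8) {c : ℝ} (hc : c ≠ 0) :
    Summable fun m : ℤ => q0 (z + ofReal (c * m)) := by
  -- Compare with the shifted `7`-series through `|c m + Re z| ≤ ‖z + c m‖`; that bound is useless
  -- only at the (at most one) `m` where `c m + Re z = 0`.
  have hg := ((Real.summable_one_div_int_add_rpow (z 0 / c) 7).2 (by norm_num)).mul_left
    (|c| ^ 7)⁻¹
  have hpole : {m : ℤ | (m : ℝ) + z 0 / c = 0}.Finite :=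
    Set.Subsingleton.finite fun a ha b hb => by
      exact_mod_cast (eq_neg_of_add_eq_zero_left ha).trans (eq_neg_of_add_eq_zero_left hb).symm
  refine hg.of_norm_bounded_eventually ?_
  filter_upwards [hpole.compl_mem_cofinite] with m hm
  have hpos : 0 < |c| * |m + z 0 / c| := by
    have : (m : ℝ) + z 0 / c ≠ 0 := hm
    positivity
  have hre : |c| * |m + z 0 / c| ≤ ‖z + ofReal (c * m)‖ := by
    calc |c| * |m + z 0 / c| = ‖(z + ofReal (c * m)) 0‖ := by
          rw [← abs_mul, mul_add, mul_div_cancel₀ _ hc]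
          simp [ofReal, ee, add_comm]
      _ ≤ ‖z + ofReal (c * m)‖ := PiLp.norm_apply_le _ _
  rw [norm_q0, show (7 : ℝ) = (7 : ℕ) by norm_num, Real.rpow_natCast, one_div, ← mul_inv,
    ← mul_pow]
  exact inv_anti₀ (by positivity) (pow_le_pow_left₀ hpos.le hre 7)

theorem octCot_two_smul (z : O8) :
    (128 : ℝ) • octCot ((2 : ℝ) • z) = ∑' m : ℤ, q0 (z + ofReal (π / 2 * m)) := by
  have hterm : ∀ m : ℤ, q0 ((2 : ℝ) • z + ofReal (π * m)) =
      (128 : ℝ)⁻¹ • q0 (z + ofReal (π / 2 * m)) := by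
    intro m
    have harg : (2 : ℝ) • (z + ofReal (π / 2 * m)) = (2 : ℝ) • z + ofReal (π * m) := by
      rw [smul_add, smul_ofReal]
      ring_nf
    rw [← harg, q0_smul]
    norm_num
  rw [octCot, tsum_congr hterm, tsum_const_smul'' _, smul_smul]
  norm_num

theorem octCot_add_octCot_add_pi_div_two (z : O8) :
    octCot z + octCot (z + ofReal (π / 2)) = (128 : ℝ) • octCot ((2 : ℝ) • z) := by
  have hsum := summable_q0_add_ofReal_mul z (c := π / 2) (by positivity)
  have heven : octCot z = ∑' k : ℤ, q0 (z + ofReal (π / 2 * ↑(2 * k))) := by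
    refine tsum_congr fun k => ?_
    push_cast
    ring_nf
  have hodd :
      octCot (z + ofReal (π / 2)) = ∑' k : ℤ, q0 (z + ofReal (π / 2 * ↑(2 * k + 1))) := by
    refine tsum_congr fun k => ?_
    rw [add_assoc, ← ofReal_add]
    push_cast
    ring_nf
  rw [octCot_two_smul, heven, hodd]
  refine (HasSum.int_even_add_odd ?_ ?_).tsum_eq.symm
  · exact (hsum.comp_injective (mul_right_injective₀ (two_ne_zero' ℤ))).hasSum
  · exact (hsum.comp_injective ((add_left_injective 1).comp
      (mul_right_injective₀ (two_ne_zero' ℤ)))).hasSum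

end Octo

theorem octTan_eq_octCot_sub_general (z : O8) :
    Octo.octTan z = Octo.octCot z - (128 : ℝ) • Octo.octCot ((2 : ℝ) • z) := by
  rw [Octo.octTan, ← Octo.octCot_add_octCot_add_pi_div_two]
  abel

/-- the octonionic tangent `tan z = - cot (z + π/2)` satisfies
`tan z = cot z - 128 cot (2z)`. -/
theorem octTan_eq_octCot_sub (z : O8) (h : ∀ m : ℤ, (2 : ℝ) • z + Octo.ofReal (π * m) ≠ 0) :
    Octo.octTan z = Octo.octCot z - (128 : ℝ) • Octo.octCot ((2 : ℝ) • z) :=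
  octTan_eq_octCot_sub_general z
end
end

section
/- The octonionic Cauchy kernel q₀: 𝕆 \ {0} → 𝕆, q₀(z) = z̄/|z|⁸ = (x0 − x1e1 − … − x7e7)/(x0² + x1² + … + x7²)⁴, is both left and right 𝕆-regular on 𝕆 \ {0}, i.e. 𝒟q₀ = 0 and q₀𝒟 = 0 there. -/
noncomputable section
open Real MeasureTheory

/-! Write `q₀ = |z|⁻⁸ • z̄`. By the product rule its partial derivatives are
`∂ₖq₀ = |z|⁻⁸ ēₖ - 8 zₖ |z|⁻¹⁰ z̄`. Multiplying by `eₖ` on the left and summing over `k`, the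
first terms give `8 |z|⁻⁸` because `eₖ ēₖ = 1`, and the second terms give `-8 |z|⁻¹⁰ z z̄`, which
is `-8 |z|⁻⁸` because `z z̄ = |z|²`; so `𝒟q₀ = 0`. The right-hand version is the mirror image,
using `ēₖ eₖ = 1` and `z̄ z = |z|²`. -/

namespace Octo

theorem mul_def (x y : O8) : x * y = ∑ i : Fin 8, ∑ j : Fin 8, (x i * y j) • mulTable i j := rfl

theorem one_def : (1 : O8) = ee 0 := rfl

theorem mul_apply (x y : O8) (k : Fin 8) :
    (x * y) k = ∑ i : Fin 8, ∑ j : Fin 8, x i * y j * mulTable i j k := by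
  simp [mul_def, WithLp.ofLp_sum, Finset.sum_apply]

theorem conj_apply (z : O8) (k : Fin 8) : conj z k = if k = 0 then z 0 else - z k := by
  by_cases h : k = 0 <;> simp [conj, ee, h]; ring

-- Only local: `O8` already carries the additive structure of `EuclideanSpace`, and a global ring
-- structure would become the preferred route to it.
local instance : NonUnitalNonAssocRing O8 where
  left_distrib x y y' := by
    simp only [mul_def, PiLp.add_apply, mul_add, add_smul, Finset.sum_add_distrib]
  right_distrib x x' y := by
    simp only [mul_def, PiLp.add_apply, add_mul, add_smul, Finset.sum_add_distrib]
  zero_mul x := by simp [mul_def]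
  mul_zero x := by simp [mul_def]

local instance : MulOneClass O8 where
  one_mul x := by
    ext k; fin_cases k <;> simp [mul_apply, Fin.sum_univ_eight, mulTable, one_def, ee]
  mul_one x := by
    ext k; fin_cases k <;> simp [mul_apply, Fin.sum_univ_eight, mulTable, one_def, ee]

local instance : IsScalarTower ℝ O8 O8 where
  smul_assoc r x y := by
    simp only [smul_eq_mul, mul_def, PiLp.smul_apply, Finset.smul_sum, smul_smul, mul_assoc]

local instance : SMulCommClass ℝ O8 O8 where
  smul_comm r x y := by
    simp only [smul_eq_mul, mul_def, PiLp.smul_apply, Finset.smul_sum, smul_smul, mul_left_comm]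

theorem mul_conj (z : O8) : z * conj z = (‖z‖ ^ 2) • 1 := by
  rw [EuclideanSpace.real_norm_sq_eq]
  ext k
  fin_cases k <;> simp [mul_apply, conj_apply, Fin.sum_univ_eight, mulTable, one_def, ee] <;> ring

theorem conj_mul (z : O8) : conj z * z = (‖z‖ ^ 2) • 1 := by
  rw [EuclideanSpace.real_norm_sq_eq]
  ext k
  fin_cases k <;> simp [mul_apply, conj_apply, Fin.sum_univ_eight, mulTable, one_def, ee] <;> ring

theorem norm_ee (k : Fin 8) : ‖ee k‖ = 1 := by simp [ee]

theorem inner_ee (z : O8) (k : Fin 8) : inner ℝ z (ee k) = z k := by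
  simp [ee, EuclideanSpace.inner_single_right]

theorem sum_smul_ee (z : O8) : ∑ k, z k • ee k = z := by
  simpa [ee] using (EuclideanSpace.basisFun (Fin 8) ℝ).sum_repr z

theorem sum_ee_mul_conj_ee : ∑ k, ee k * conj (ee k) = (8 : ℝ) • 1 := by
  simp [mul_conj, norm_ee, ← Nat.cast_smul_eq_nsmul ℝ]

theorem sum_conj_ee_mul_ee : ∑ k, conj (ee k) * ee k = (8 : ℝ) • 1 := by
  simp [conj_mul, norm_ee, ← Nat.cast_smul_eq_nsmul ℝ]

theorem sum_smul_ee_mul (z w : O8) : ∑ k, z k • (ee k * w) = z * w := by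
  simp_rw [← smul_mul_assoc, ← Finset.sum_mul, sum_smul_ee]

theorem sum_smul_mul_ee (z w : O8) : ∑ k, z k • (w * ee k) = w * z := by
  simp_rw [← mul_smul_comm, ← Finset.mul_sum, sum_smul_ee]

theorem Dl_eq_sum (f : O8 → O8) (z : O8) : Dl f z = ∑ k, ee k * fderiv ℝ f z (ee k) := by
  conv_rhs => rw [Fin.sum_univ_succ]
  rw [Dl, ← one_def, one_mul]

theorem Dr_eq_sum (f : O8 → O8) (z : O8) : Dr f z = ∑ k, fderiv ℝ f z (ee k) * ee k := by
  conv_rhs => rw [Fin.sum_univ_succ]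
  rw [Dr, ← one_def, mul_one]

def conjCLM : O8 →L[ℝ] O8 :=
  (2 : ℝ) • (EuclideanSpace.proj 0).smulRight (ee 0) - ContinuousLinearMap.id ℝ O8

theorem conjCLM_apply (y : O8) : conjCLM y = conj y := by
  simp [conjCLM, conj, smul_smul]

theorem hasFDerivAt_q0 {z : O8} (hz : z ≠ 0) :
    HasFDerivAt q0 ((‖z‖ ^ 8)⁻¹ • conjCLM -
      (8 / ‖z‖ ^ 10) • (innerSL ℝ z).smulRight (conj z)) z := by
  have hN : ‖z‖ ≠ 0 := norm_ne_zero_iff.mpr hz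
  have hpow : HasDerivAt (fun u : ℝ => u ^ 4) (4 * (‖z‖ ^ 2) ^ 3) (‖z‖ ^ 2) := by
    simpa using hasDerivAt_pow 4 (‖z‖ ^ 2)
  have hinv := (hpow.inv (by positivity)).comp_hasFDerivAt z
    (hasStrictFDerivAt_norm_sq z).hasFDerivAt
  have hq0 : q0 = fun y => ((‖y‖ ^ 2) ^ 4)⁻¹ • conjCLM y := by
    ext1 y; simp [q0, conjCLM_apply, ← pow_mul]
  rw [hq0]
  refine (hinv.smul conjCLM.hasFDerivAt).congr_fderiv ?_
  ext1 v
  simp only [add_apply, sub_apply, smul_apply, ContinuousLinearMap.smulRight_apply,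
    Function.comp_apply, Pi.inv_apply, innerSL_apply_apply, conjCLM_apply, smul_smul, smul_eq_mul,
    nsmul_eq_mul]
  match_scalars
  · ring
  · field_simp
    ring

theorem fderiv_q0_apply {z : O8} (hz : z ≠ 0) (v : O8) :
    fderiv ℝ q0 z v = (‖z‖ ^ 8)⁻¹ • conj v - (8 * inner ℝ z v / ‖z‖ ^ 10) • conj z := by
  simp [(hasFDerivAt_q0 hz).fderiv, conjCLM_apply, smul_smul, mul_div_right_comm]

theorem Dl_q0 {z : O8} (hz : z ≠ 0) : Dl q0 z = 0 := by
  have hN : ‖z‖ ≠ 0 := norm_ne_zero_iff.mpr hz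
  have hsum : ∑ k, (8 * z k / ‖z‖ ^ 10) • (ee k * conj z) = (8 / ‖z‖ ^ 10) • (z * conj z) := by
    rw [← sum_smul_ee_mul, Finset.smul_sum]
    simp_rw [smul_smul, mul_div_right_comm]
  simp_rw [Dl_eq_sum, fderiv_q0_apply hz, inner_ee, mul_sub, mul_smul_comm, Finset.sum_sub_distrib,
    ← Finset.smul_sum, sum_ee_mul_conj_ee, hsum, mul_conj, smul_smul, ← sub_smul]
  exact smul_eq_zero_of_left (by field_simp; ring) 1

theorem Dr_q0 {z : O8} (hz : z ≠ 0) : Dr q0 z = 0 := by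
  have hN : ‖z‖ ≠ 0 := norm_ne_zero_iff.mpr hz
  have hsum : ∑ k, (8 * z k / ‖z‖ ^ 10) • (conj z * ee k) = (8 / ‖z‖ ^ 10) • (conj z * z) := by
    rw [← sum_smul_mul_ee, Finset.smul_sum]
    simp_rw [smul_smul, mul_div_right_comm]
  simp_rw [Dr_eq_sum, fderiv_q0_apply hz, inner_ee, sub_mul, smul_mul_assoc, Finset.sum_sub_distrib,
    ← Finset.smul_sum, sum_conj_ee_mul_ee, hsum, conj_mul, smul_smul, ← sub_smul]
  exact smul_eq_zero_of_left (by field_simp; ring) 1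

end Octo

/-- the octonionic Cauchy kernel `q₀(z) = z̄/|z|⁸` (with
`|z|⁸ = (x₀²+⋯+x₇²)⁴`) is both left and right 𝕆-regular on `𝕆 \ {0}`. -/
theorem q0_left_and_right_regular (z : O8) (hz : z ≠ 0) :
    (‖z‖ ^ 8 = (∑ i : Fin 8, z i ^ 2) ^ 4) ∧
    Octo.Dl Octo.q0 z = 0 ∧ Octo.Dr Octo.q0 z = 0 :=
  ⟨by rw [← EuclideanSpace.real_norm_sq_eq, ← pow_mul], Octo.Dl_q0 hz, Octo.Dr_q0 hz⟩
end
end
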